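/- If X is a Banach space with n(X) = 1 satisfying the local point property L_{p,p}-nu, then the norm of X is strongly subdifferentiable at every point; specifically, for every x₀ ∈ S_X and ε > 0 there is η > 0 such that whenever x* ∈ S_{X*} satisfies |x*(x₀)| > 1 − η, there exists z* ∈ S_{X*} with |z*(x₀)| = 1 and ‖z* − x*‖ < ε. -/

import Mathlib

/-! A norm-one functional `f` is recovered from the rank-one operator `T = f ⊗ x₀` as `g ∘ T`,
where `(x₀, g)` is a state. Since `n(X) = 1`, `v(T) = ‖T‖ = 1`, and `|g (T x₀)| = |f x₀|` is close
to `1`, so L_{p,p}-nu at `(x₀, g)` yields `S` with `v(S) = 1`, `|g (S x₀)| = 1` and `S` close to `T`.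
Then `z = g ∘ S` attains its norm `‖S‖ = v(S) = 1` at `x₀` and is within `‖S - T‖` of `f`. -/

noncomputable section

open Filter Topology

variable (𝕜 : Type*) [RCLike 𝕜] (X : Type*) [NormedAddCommGroup X] [NormedSpace 𝕜 X]

/-- `(x, f)` is a state of `X`: `x ∈ S_X`, `f ∈ S_{X*}`, `f x = 1`. -/
def IsState (x : X) (f : X →L[𝕜] 𝕜) : Prop :=
  ‖x‖ = 1 ∧ ‖f‖ = 1 ∧ f x = 1

/-- The numerical radius `v(T) = sup {|f (T x)| : (x, f) ∈ Π(X)}`. -/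
def nrad (T : X →L[𝕜] X) : ℝ :=
  sSup {r : ℝ | ∃ x f, IsState 𝕜 X x f ∧ r = ‖f (T x)‖}

/-- The numerical index `n(X) = inf {v(T) : ‖T‖ = 1}`. -/
def nindex : ℝ :=
  sInf {r : ℝ | ∃ T : X →L[𝕜] X, ‖T‖ = 1 ∧ r = nrad 𝕜 X T}

/-- The local point property L_{p,p}-nu. -/
def LppNu : Prop :=
  ∀ ε : ℝ, 0 < ε → ∀ (x : X) (f : X →L[𝕜] 𝕜), IsState 𝕜 X x f →
    ∃ η : ℝ, 0 < η ∧ ∀ T : X →L[𝕜] X, nrad 𝕜 X T = 1 → 1 - η < ‖f (T x)‖ →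
      ∃ S : X →L[𝕜] X, nrad 𝕜 X S = 1 ∧ ‖f (S x)‖ = 1 ∧ ‖S - T‖ < ε

section NumericalRadius

variable {𝕜 X}

theorem exists_isState {x : X} (hx : ‖x‖ = 1) : ∃ f, IsState 𝕜 X x f := by
  obtain ⟨f, hf, hfx⟩ := exists_dual_vector 𝕜 x (by rw [hx]; exact one_ne_zero)
  exact ⟨f, hx, hf, by rw [hfx, hx, RCLike.ofReal_one]⟩

theorem IsState.norm_apply_le {x : X} {f : X →L[𝕜] 𝕜} (hs : IsState 𝕜 X x f)
    (T : X →L[𝕜] X) : ‖f (T x)‖ ≤ ‖T‖ :=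
  calc ‖f (T x)‖ ≤ ‖f‖ * (‖T‖ * ‖x‖) := f.le_opNorm_of_le (T.le_opNorm x)
    _ = ‖T‖ := by rw [hs.1, hs.2.1, one_mul, mul_one]

theorem nrad_nonneg (T : X →L[𝕜] X) : 0 ≤ nrad 𝕜 X T :=
  Real.sSup_nonneg <| by rintro r ⟨x, f, -, rfl⟩; exact norm_nonneg _

theorem nrad_le_norm (T : X →L[𝕜] X) : nrad 𝕜 X T ≤ ‖T‖ :=
  Real.sSup_le (by rintro r ⟨x, f, hs, rfl⟩; exact hs.norm_apply_le T) (norm_nonneg T)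

theorem IsState.norm_apply_le_nrad {x : X} {f : X →L[𝕜] 𝕜} (hs : IsState 𝕜 X x f)
    (T : X →L[𝕜] X) : ‖f (T x)‖ ≤ nrad 𝕜 X T :=
  le_csSup ⟨‖T‖, by rintro r ⟨y, g, hs', rfl⟩; exact hs'.norm_apply_le T⟩ ⟨x, f, hs, rfl⟩

theorem nrad_smul_le (c : 𝕜) (T : X →L[𝕜] X) : nrad 𝕜 X (c • T) ≤ ‖c‖ * nrad 𝕜 X T := by
  refine Real.sSup_le ?_ (mul_nonneg (norm_nonneg c) (nrad_nonneg T))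
  rintro r ⟨x, f, hs, rfl⟩
  rw [smul_apply, map_smul, norm_smul]
  exact mul_le_mul_of_nonneg_left (hs.norm_apply_le_nrad T) (norm_nonneg c)

theorem one_le_nrad_of_nindex_eq_one (hn : nindex 𝕜 X = 1) {T : X →L[𝕜] X} (hT : ‖T‖ = 1) :
    1 ≤ nrad 𝕜 X T :=
  hn ▸ csInf_le ⟨0, by rintro r ⟨S, -, rfl⟩; exact nrad_nonneg S⟩ ⟨T, hT, rfl⟩

theorem nrad_eq_norm_of_nindex_eq_one (hn : nindex 𝕜 X = 1) (T : X →L[𝕜] X) :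
    nrad 𝕜 X T = ‖T‖ := by
  refine le_antisymm (nrad_le_norm T) ?_
  rcases eq_or_ne T 0 with rfl | hT
  · rw [norm_zero]; exact nrad_nonneg 0
  have hpos : 0 < ‖T‖ := norm_pos_iff.mpr hT
  have hc : ‖((‖T‖⁻¹ : ℝ) : 𝕜)‖ = ‖T‖⁻¹ := by
    rw [RCLike.norm_ofReal, abs_of_pos (inv_pos.mpr hpos)]
  have hnormalised : ‖((‖T‖⁻¹ : ℝ) : 𝕜) • T‖ = 1 := by
    rw [norm_smul, hc, inv_mul_cancel₀ hpos.ne']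
  have := (one_le_nrad_of_nindex_eq_one hn hnormalised).trans (nrad_smul_le _ T)
  rwa [hc, ← div_eq_inv_mul, one_le_div₀ hpos] at this

theorem ContinuousLinearMap.comp_smulRight_of_apply_eq_one {g : X →L[𝕜] 𝕜} {x : X}
    (hgx : g x = 1) (f : X →L[𝕜] 𝕜) : g.comp (f.smulRight x) = f := by
  ext y
  simp [hgx]

end NumericalRadius

theorem stmt16 (hn : nindex 𝕜 X = 1) (h : LppNu 𝕜 X) :
    ∀ x₀ : X, ‖x₀‖ = 1 → ∀ ε : ℝ, 0 < ε →
      ∃ η : ℝ, 0 < η ∧ ∀ f : X →L[𝕜] 𝕜, ‖f‖ = 1 → 1 - η < ‖f x₀‖ →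
        ∃ z : X →L[𝕜] 𝕜, ‖z‖ = 1 ∧ ‖z x₀‖ = 1 ∧ ‖z - f‖ < ε := by
  intro x₀ hx₀ ε hε
  obtain ⟨g, hg⟩ := exists_isState (𝕜 := 𝕜) hx₀
  obtain ⟨η, hη, hLpp⟩ := h ε hε x₀ g hg
  refine ⟨η, hη, fun f hf hfx₀ => ?_⟩
  have hgT : g.comp (f.smulRight x₀) = f := g.comp_smulRight_of_apply_eq_one hg.2.2 f
  have hTnorm : ‖f.smulRight x₀‖ = 1 := by
    rw [ContinuousLinearMap.norm_smulRight_apply, hf, hx₀, one_mul]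
  obtain ⟨S, hSrad, hSx₀, hST⟩ := hLpp (f.smulRight x₀)
    ((nrad_eq_norm_of_nindex_eq_one hn _).trans hTnorm)
    (by rwa [← ContinuousLinearMap.comp_apply, hgT])
  have hSnorm : ‖S‖ = 1 := (nrad_eq_norm_of_nindex_eq_one hn S).symm.trans hSrad
  refine ⟨g.comp S, le_antisymm ?_ ?_, hSx₀, ?_⟩
  · simpa [hg.2.1, hSnorm] using g.opNorm_comp_le S
  · simpa [hSx₀, hx₀] using (g.comp S).le_opNorm x₀
  · calc ‖g.comp S - f‖ = ‖g.comp (S - f.smulRight x₀)‖ := by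
          rw [ContinuousLinearMap.comp_sub, hgT]
      _ ≤ ‖g‖ * ‖S - f.smulRight x₀‖ := g.opNorm_comp_le _
      _ < ε := by rwa [hg.2.1, one_mul]
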